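/- arXiv:1305.4492 — 3 statements merged into one kernel-verified Lean document; each statement's English description precedes it below -/
import Mathlib

section
/- Every IFS-attractor is a topological IFS-attractor: if X is a compact metric space with continuous maps f_1,…,f_n : X → X such that X = ⋃ f_i(X) and each f_i has Lipschitz constant < 1, then for every open cover 𝒰 of X there exists m ∈ ℕ such that for all g_1,…,g_m ∈ {f_1,…,f_n}, the set g_1 ∘ ⋯ ∘ g_m(X) is contained in some member of 𝒰. -/
/-- Composition `F 0 ∘ F 1 ∘ ⋯ ∘ F (m-1)` of a finite sequence of self-maps. -/
def finComp {X : Type*} : (m : ℕ) → (Fin m → X → X) → X → X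
  | 0, _ => id
  | m + 1, F => F 0 ∘ finComp m (fun i => F i.succ)

lemma finComp_lipschitz {X : Type*} [MetricSpace X] (K : NNReal) :
    ∀ (m : ℕ) (F : Fin m → X → X), (∀ i, LipschitzWith K (F i)) →
      LipschitzWith (K ^ m) (finComp m F)
  | 0, _, _ => by simpa [finComp] using LipschitzWith.id
  | m + 1, F, hF => by
    have ih := finComp_lipschitz K m (fun i => F i.succ) (fun i => hF i.succ)
    have := (hF 0).comp ih
    simpa [finComp, pow_succ, mul_comm] using this

theorem ifs_attractor_is_topological_ifs_attractor
    {X : Type*} [MetricSpace X] [CompactSpace X] [Nonempty X]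
    (n : ℕ) (f : Fin n → X → X)
    (hcont : ∀ i, Continuous (f i))
    (hcontr : ∀ i, ∃ K : NNReal, K < 1 ∧ LipschitzWith K (f i))
    (hcover : (⋃ i, Set.range (f i)) = Set.univ)
    (𝒰 : Set (Set X)) (hopen : ∀ U ∈ 𝒰, IsOpen U) (hU : ⋃₀ 𝒰 = Set.univ) :
    ∃ m : ℕ, ∀ g : Fin m → Fin n,
      ∃ U ∈ 𝒰, Set.range (finComp m (fun i => f (g i))) ⊆ U := by
  rcases Nat.eq_zero_or_pos n with hn | hn
  · subst hn
    exact ⟨1, fun g => (g 0).elim0⟩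
  -- choose a uniform Lipschitz constant K < 1
  choose Ki hKi hlip using hcontr
  set K : NNReal := Finset.univ.sup Ki with hK
  have hKlt : K < 1 := by
    apply Finset.sup_lt_iff (by norm_num : (⊥ : NNReal) < 1) |>.2
    intro i _; exact hKi i
  have hlipK : ∀ i, LipschitzWith K (f i) :=
    fun i => (hlip i).weaken (Finset.le_sup (Finset.mem_univ i))
  -- Lebesgue number
  obtain ⟨δ, hδ, hleb⟩ := lebesgue_number_lemma_of_metric_sUnion isCompact_univ hopen (hU ▸ subset_rfl)
  -- diameter bound
  set D : ℝ := Metric.diam (Set.univ : Set X)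
  have hD0 : 0 ≤ D := Metric.diam_nonneg
  have hbdd : Bornology.IsBounded (Set.univ : Set X) := isCompact_univ.isBounded
  obtain ⟨m, hm⟩ : ∃ m : ℕ, (K : ℝ) ^ m < δ / (D + 1) := by
    apply exists_pow_lt_of_lt_one (by positivity)
    exact_mod_cast hKlt
  refine ⟨m, fun g => ?_⟩
  set h : X → X := finComp m (fun i => f (g i)) with hh
  have hLip : LipschitzWith (K ^ m) h := finComp_lipschitz K m _ (fun i => hlipK (g i))
  obtain ⟨x0⟩ := (inferInstance : Nonempty X)
  obtain ⟨U, hU𝒰, hball⟩ := hleb (h x0) (Set.mem_univ _)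
  refine ⟨U, hU𝒰, ?_⟩
  rintro _ ⟨x, rfl⟩
  apply hball
  have h1 : dist (h x) (h x0) ≤ (K : ℝ) ^ m * dist x x0 := by
    have := hLip.dist_le_mul x x0
    simpa using this
  have h2 : dist x x0 ≤ D := Metric.dist_le_diam_of_mem hbdd trivial trivial
  have h3 : (K : ℝ) ^ m * dist x x0 ≤ (K : ℝ) ^ m * (D + 1) := by
    apply mul_le_mul_of_nonneg_left (by linarith) (by positivity)
  have h4 : (K : ℝ) ^ m * (D + 1) < δ := by
    calc (K : ℝ) ^ m * (D + 1) < δ / (D + 1) * (D + 1) := by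
          apply mul_lt_mul_of_pos_right hm (by positivity)
      _ = δ := div_mul_cancel₀ δ (by positivity)
  simp only [Metric.mem_ball]
  calc dist (h x) (h x0) ≤ (K : ℝ) ^ m * dist x x0 := h1
    _ ≤ (K : ℝ) ^ m * (D + 1) := h3
    _ < δ := h4
end

section
/- Suppose X is a compact metric space with continuous maps {f_1, f_2, g_1,…,g_4, h_1,…,h_4} such that: (a) any m-fold composition purely of g's, purely of h's, or purely of f's maps X to a set of diameter ≤ 2^{-m} diam(X); (b) any composition g_i ∘ f_j, g_i ∘ h_j, h_i ∘ f_j, h_i ∘ g_j maps X to a single point; (c) there are constants α(k) ≥ 1 with diam of f_{i_k}∘⋯∘f_{i_1}∘g_{j_1}∘⋯∘g_{j_n}(X) ≤ (∏_{i=0}^{k-1} α(i)) · 2^{-n} diam(X), and similarly with h's in place of g's. Then for every λ > 0 there exists m such that every m-fold composition of these maps has image of diameter < λ. -/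
def compList {X : Type*} (L : List (X → X)) : X → X := L.foldr (· ∘ ·) id

lemma compList_cons {X : Type*} (w : X → X) (L : List (X → X)) :
    compList (w :: L) = w ∘ compList L := rfl

lemma compList_append {X : Type*} (A B : List (X → X)) :
    compList (A ++ B) = compList A ∘ compList B := by
  induction A with
  | nil => rfl
  | cons w A ih => simp [compList_cons, ih, Function.comp_assoc, List.cons_append]

lemma finComp_eq_compList {X : Type*} : ∀ (m : ℕ) (F : Fin m → X → X),
    finComp m F = compList (List.ofFn F)
  | 0, _ => rfl
  | m + 1, F => by
    rw [List.ofFn_succ, compList_cons, ← finComp_eq_compList m]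
    rfl

lemma compList_eq_finComp {X ι : Type*} (b : ι → X → X) :
    ∀ (L : List (X → X)), (∀ w ∈ L, ∃ j, w = b j) →
    ∃ σ : Fin L.length → ι, compList L = finComp L.length (fun i => b (σ i))
  | [], _ => ⟨fun i => i.elim0, rfl⟩
  | w :: L, hL => by
    obtain ⟨j, hj⟩ := hL w (by simp)
    obtain ⟨σ, hσ⟩ := compList_eq_finComp b L (fun x hx => hL x (by simp [hx]))
    refine ⟨Fin.cases j σ, ?_⟩
    show w ∘ compList L = _
    rw [hj, hσ]
    show _ = b (Fin.cases j σ 0) ∘ finComp L.length fun i => b (Fin.cases j σ i.succ)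
    simp

lemma list_split {α : Type*} (p : α → Prop) : ∀ L : List α, (∀ w ∈ L, p w) ∨
    ∃ A v B, L = A ++ v :: B ∧ (∀ w ∈ A, p w) ∧ ¬ p v := by
  intro L
  induction L with
  | nil => left; simp
  | cons w L ih =>
    by_cases hw : p w
    · rcases ih with hall | ⟨A, v, B, hLB, hA, hv⟩
      · left; intro x hx; rcases List.mem_cons.mp hx with rfl | hx
        · exact hw
        · exact hall x hx
      · right; refine ⟨w :: A, v, B, by rw [hLB]; rfl, ?_, hv⟩
        intro x hx; rcases List.mem_cons.mp hx with rfl | hx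
        · exact hw
        · exact hA x hx
    · right; exact ⟨[], w, L, rfl, by simp, hw⟩

lemma diam_collapse {X : Type*} [MetricSpace X] (P S : List (X → X)) (u v : X → X) (p : X)
    (hp : Set.range (u ∘ v) = {p}) :
    Metric.diam (Set.range (compList (P ++ u :: v :: S))) = 0 := by
  apply Metric.diam_subsingleton
  apply Set.subsingleton_of_subset_singleton (a := compList P p)
  rintro y ⟨x, rfl⟩
  have huv : (u ∘ v) (compList S x) = p := by
    have := Set.mem_range_self (f := u ∘ v) (compList S x)
    rwa [hp, Set.mem_singleton_iff] at this
  show compList (P ++ u :: v :: S) x ∈ ({compList P p} : Set X)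
  rw [compList_append, Set.mem_singleton_iff]
  simp only [Function.comp_apply, compList_cons]
  exact congrArg (compList P) huv

lemma good_bound {X : Type*} [MetricSpace X] [CompactSpace X]
    (f : Fin 2 → X → X) (b : Fin 4 → X → X) (α : ℕ → ℝ) (hα : ∀ k, 1 ≤ α k)
    (hf : ∀ (m : ℕ) (σ : Fin m → Fin 2),
      Metric.diam (Set.range (finComp m (fun i => f (σ i)))) ≤
        (1 / 2) ^ m * Metric.diam (Set.univ : Set X))
    (hfb : ∀ (k n : ℕ) (σ : Fin k → Fin 2) (τ : Fin n → Fin 4),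
      Metric.diam (Set.range
          (finComp k (fun i => f (σ i)) ∘ finComp n (fun i => b (τ i)))) ≤
        (∏ i ∈ Finset.range k, α i) * (1 / 2) ^ n * Metric.diam (Set.univ : Set X))
    (lam : ℝ) (n₁ n₂ : ℕ)
    (h1 : (1 / 2 : ℝ) ^ n₁ * Metric.diam (Set.univ : Set X) < lam)
    (h2 : (∏ i ∈ Finset.range n₁, α i) * (1 / 2) ^ n₂ * Metric.diam (Set.univ : Set X) < lam)
    (A B : List (X → X)) (hA : ∀ w ∈ A, ∃ j, w = f j) (hB : ∀ w ∈ B, ∃ j, w = b j)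
    (hlen : A.length + B.length = n₁ + n₂) :
    Metric.diam (Set.range (compList (A ++ B))) < lam := by
  have hbdd : ∀ s : Set X, Bornology.IsBounded s :=
    fun s => isCompact_univ.isBounded.subset (Set.subset_univ s)
  have hD : (0:ℝ) ≤ Metric.diam (Set.univ : Set X) := Metric.diam_nonneg
  by_cases hk : n₁ ≤ A.length
  · obtain ⟨σ, hσ⟩ := compList_eq_finComp f (A.take n₁)
      (fun w hw => hA w (List.take_subset _ _ hw))
    have hlen1 : (A.take n₁).length = n₁ := by simp [hk]
    have hsub : Set.range (compList (A ++ B)) ⊆ Set.range (compList (A.take n₁)) := by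
      conv_lhs => rw [show A ++ B = A.take n₁ ++ (A.drop n₁ ++ B) by
        rw [← List.append_assoc, List.take_append_drop]]
      rw [compList_append]
      exact Set.range_comp_subset_range _ _
    calc Metric.diam (Set.range (compList (A ++ B)))
        ≤ Metric.diam (Set.range (compList (A.take n₁))) := Metric.diam_mono hsub (hbdd _)
      _ ≤ (1/2) ^ (A.take n₁).length * Metric.diam (Set.univ : Set X) := by
          rw [hσ]; exact hf _ σ
      _ < lam := by rw [hlen1]; exact h1
  · push_neg at hk
    obtain ⟨σ, hσ⟩ := compList_eq_finComp f A hA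
    obtain ⟨τ, hτ⟩ := compList_eq_finComp b B hB
    have hn : n₂ ≤ B.length := by omega
    have h1p : ∀ s : Finset ℕ, (1:ℝ) ≤ ∏ i ∈ s, α i := fun s =>
      calc (1:ℝ) = ∏ _i ∈ s, 1 := by simp
        _ ≤ ∏ i ∈ s, α i := Finset.prod_le_prod (fun i _ => zero_le_one) (fun i _ => hα i)
    have hP : ∏ i ∈ Finset.range A.length, α i ≤ ∏ i ∈ Finset.range n₁, α i := by
      rw [← Finset.prod_range_mul_prod_Ico α hk.le]
      exact le_mul_of_one_le_right (le_trans zero_le_one (h1p _)) (h1p _)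
    have hP0 : (0:ℝ) ≤ ∏ i ∈ Finset.range A.length, α i :=
      le_trans zero_le_one (h1p _)
    have hr : ((1:ℝ)/2) ^ B.length ≤ (1/2) ^ n₂ :=
      pow_le_pow_of_le_one (by norm_num) (by norm_num) hn
    calc Metric.diam (Set.range (compList (A ++ B)))
        ≤ (∏ i ∈ Finset.range A.length, α i) * (1/2) ^ B.length *
            Metric.diam (Set.univ : Set X) := by
          rw [compList_append, hσ, hτ]; exact hfb _ _ σ τ
      _ ≤ (∏ i ∈ Finset.range n₁, α i) * (1/2) ^ n₂ *
            Metric.diam (Set.univ : Set X) := by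
          apply mul_le_mul_of_nonneg_right _ hD
          exact mul_le_mul hP hr (by positivity) (le_trans hP0 hP)
      _ < lam := h2

theorem shark_ifs_compositions_eventually_small
    {X : Type*} [MetricSpace X] [CompactSpace X] [Nonempty X]
    (f : Fin 2 → X → X) (g : Fin 4 → X → X) (h : Fin 4 → X → X)
    (hfc : ∀ i, Continuous (f i)) (hgc : ∀ i, Continuous (g i))
    (hhc : ∀ i, Continuous (h i))
    (hg : ∀ (m : ℕ) (σ : Fin m → Fin 4),
      Metric.diam (Set.range (finComp m (fun i => g (σ i)))) ≤
        (1 / 2) ^ m * Metric.diam (Set.univ : Set X))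
    (hh : ∀ (m : ℕ) (σ : Fin m → Fin 4),
      Metric.diam (Set.range (finComp m (fun i => h (σ i)))) ≤
        (1 / 2) ^ m * Metric.diam (Set.univ : Set X))
    (hf : ∀ (m : ℕ) (σ : Fin m → Fin 2),
      Metric.diam (Set.range (finComp m (fun i => f (σ i)))) ≤
        (1 / 2) ^ m * Metric.diam (Set.univ : Set X))
    (hgf : ∀ i j, ∃ p, Set.range (g i ∘ f j) = {p})
    (hgh : ∀ i j, ∃ p, Set.range (g i ∘ h j) = {p})
    (hhf : ∀ i j, ∃ p, Set.range (h i ∘ f j) = {p})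
    (hhg : ∀ i j, ∃ p, Set.range (h i ∘ g j) = {p})
    (α : ℕ → ℝ) (hα : ∀ k, 1 ≤ α k)
    (hfg : ∀ (k n : ℕ) (σ : Fin k → Fin 2) (τ : Fin n → Fin 4),
      Metric.diam (Set.range
          (finComp k (fun i => f (σ i)) ∘ finComp n (fun i => g (τ i)))) ≤
        (∏ i ∈ Finset.range k, α i) * (1 / 2) ^ n *
          Metric.diam (Set.univ : Set X))
    (hfh : ∀ (k n : ℕ) (σ : Fin k → Fin 2) (τ : Fin n → Fin 4),
      Metric.diam (Set.range
          (finComp k (fun i => f (σ i)) ∘ finComp n (fun i => h (τ i)))) ≤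
        (∏ i ∈ Finset.range k, α i) * (1 / 2) ^ n *
          Metric.diam (Set.univ : Set X)) :
    ∀ lam : ℝ, 0 < lam → ∃ m : ℕ, ∀ F : Fin m → X → X,
      (∀ i, (∃ j, F i = f j) ∨ (∃ j, F i = g j) ∨ (∃ j, F i = h j)) →
      Metric.diam (Set.range (finComp m F)) < lam := by
  intro lam hlam
  set D := Metric.diam (Set.univ : Set X) with hDdef
  have hD : (0:ℝ) ≤ D := Metric.diam_nonneg
  have hD1 : (0:ℝ) < D + 1 := by linarith
  -- choose n₁
  obtain ⟨n₁, hn₁⟩ := exists_pow_lt_of_lt_one (div_pos hlam hD1)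
    (by norm_num : (1/2 : ℝ) < 1)
  have h1 : (1/2 : ℝ) ^ n₁ * D < lam := by
    have := mul_lt_mul_of_pos_right hn₁ hD1
    rw [div_mul_cancel₀ _ (ne_of_gt hD1)] at this
    have h' : (1/2:ℝ) ^ n₁ * D ≤ (1/2) ^ n₁ * (D + 1) :=
      mul_le_mul_of_nonneg_left (by linarith) (by positivity)
    linarith
  -- choose n₂
  have h1p : ∀ s : Finset ℕ, (1:ℝ) ≤ ∏ i ∈ s, α i := fun s =>
    calc (1:ℝ) = ∏ _i ∈ s, 1 := by simp
      _ ≤ ∏ i ∈ s, α i := Finset.prod_le_prod (fun i _ => zero_le_one) (fun i _ => hα i)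
  set P := ∏ i ∈ Finset.range n₁, α i with hPdef
  have hP0 : (0:ℝ) < P := lt_of_lt_of_le zero_lt_one (h1p _)
  obtain ⟨n₂, hn₂⟩ := exists_pow_lt_of_lt_one (div_pos hlam (mul_pos hP0 hD1))
    (by norm_num : (1/2 : ℝ) < 1)
  have h2 : P * (1/2 : ℝ) ^ n₂ * D < lam := by
    have hlt : P * ((1/2:ℝ) ^ n₂) < P * (lam / (P * (D + 1))) :=
      mul_lt_mul_of_pos_left hn₂ hP0
    have heq : P * (lam / (P * (D + 1))) * (D + 1) = lam := by
      field_simp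
    have hlt2 : P * (1/2:ℝ) ^ n₂ * (D + 1) < lam := by
      calc P * (1/2:ℝ) ^ n₂ * (D + 1) < P * (lam / (P * (D + 1))) * (D + 1) :=
            mul_lt_mul_of_pos_right hlt hD1
        _ = lam := heq
    have h' : P * (1/2:ℝ) ^ n₂ * D ≤ P * (1/2) ^ n₂ * (D + 1) :=
      mul_le_mul_of_nonneg_left (by linarith) (by positivity)
    linarith
  refine ⟨n₁ + n₂, ?_⟩
  intro F hF
  rw [finComp_eq_compList]
  set L := List.ofFn F with hLdef
  have hLlen : L.length = n₁ + n₂ := by simp [hLdef]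
  have hL : ∀ w ∈ L, (∃ j, w = f j) ∨ (∃ j, w = g j) ∨ (∃ j, w = h j) := by
    intro w hw
    rw [hLdef, List.mem_ofFn] at hw
    obtain ⟨i, rfl⟩ := hw
    exact hF i
  clear_value L
  -- main helper handling the g-branch and h-branch symmetrically
  have main : ∀ (b o : Fin 4 → X → X),
      (∀ (k n : ℕ) (σ : Fin k → Fin 2) (τ : Fin n → Fin 4),
        Metric.diam (Set.range
            (finComp k (fun i => f (σ i)) ∘ finComp n (fun i => b (τ i)))) ≤
          (∏ i ∈ Finset.range k, α i) * (1 / 2) ^ n * D) →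
      (∀ i j, ∃ p, Set.range (b i ∘ f j) = {p}) →
      (∀ i j, ∃ p, Set.range (b i ∘ o j) = {p}) →
      ∀ (A : List (X → X)) (v : X → X) (B : List (X → X)),
        L = A ++ v :: B → (∀ w ∈ A, ∃ j, w = f j) → (∃ j, v = b j) →
        (∀ w ∈ B, (∃ j, w = f j) ∨ (∃ j, w = b j) ∨ (∃ j, w = o j)) →
        Metric.diam (Set.range (compList L)) < lam := by
    intro b o hfb hbf hbo A v B hLeq hA hv hB
    rcases list_split (fun w => ∃ j, w = b j) B with hallB | ⟨C, u, E, hBeq, hC, hu⟩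
    · -- good word: A all f, v :: B all b
      rw [hLeq]
      apply good_bound f b α hα hf hfb lam n₁ n₂ h1 h2 A (v :: B) hA
      · intro w hw
        rcases List.mem_cons.mp hw with rfl | hw
        · exact hv
        · exact hallB w hw
      · rw [hLeq] at hLlen
        simpa using hLlen
    · -- collapse: last b of (v :: C) followed by u, which is f or o
      have hne : (v :: C) ≠ [] := by simp
      have hlast : ∃ j, (v :: C).getLast hne = b j := by
        have := List.getLast_mem hne
        rcases List.mem_cons.mp this with heq | hmem
        · rw [heq]; exact hv
        · exact hC _ hmem
      obtain ⟨jb, hjb⟩ := hlast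
      have huL : u ∈ L := by
        rw [hLeq, hBeq]
        simp
      have hu' : (∃ j, u = f j) ∨ (∃ j, u = o j) := by
        rcases hB u (by rw [hBeq]; simp) with h' | h' | h'
        · exact Or.inl h'
        · exact absurd h' hu
        · exact Or.inr h'
      have hdecomp : L = (A ++ (v :: C).dropLast) ++
          (v :: C).getLast hne :: u :: E := by
        rw [hLeq, hBeq]
        conv_lhs => rw [show v :: (C ++ u :: E) = (v :: C) ++ u :: E from rfl,
          ← List.dropLast_append_getLast hne]
        simp
      obtain ⟨p, hp⟩ : ∃ p, Set.range ((v :: C).getLast hne ∘ u) = {p} := by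
        rcases hu' with ⟨jf, rfl⟩ | ⟨jo, rfl⟩
        · exact hjb ▸ hbf jb jf
        · exact hjb ▸ hbo jb jo
      rw [hdecomp, diam_collapse _ _ _ _ p hp]
      exact hlam
  rcases list_split (fun w => ∃ j, w = f j) L with hall | ⟨A, v, B, hLeq, hA, hv⟩
  · -- pure f word
    have := good_bound f g α hα hf (fun k n σ τ => hfg k n σ τ) lam n₁ n₂ h1 h2 L []
      hall (by simp) (by simpa using hLlen)
    simpa using this
  · have hvmem : v ∈ L := by rw [hLeq]; simp
    rcases hL v hvmem with h' | ⟨j, hj⟩ | ⟨j, hj⟩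
    · exact absurd h' hv
    · refine main g h hfg hgf hgh A v B hLeq hA ⟨j, hj⟩ ?_
      intro w hw
      have : w ∈ L := by rw [hLeq]; simp [hw]
      rcases hL w this with h' | h' | h'
      · exact Or.inl h'
      · exact Or.inr (Or.inl h')
      · exact Or.inr (Or.inr h')
    · refine main h g hfh hhf hhg A v B hLeq hA ⟨j, hj⟩ ?_
      intro w hw
      have : w ∈ L := by rw [hLeq]; simp [hw]
      rcases hL w this with h' | h' | h'
      · exact Or.inl h'
      · exact Or.inr (Or.inr h')
      · exact Or.inr (Or.inl h')
end

section
/- With the four maps g₁, g₂, g₃, g₄ : M → M defined by g₁|_{M₁}(x) = M₁(φ(t_x)/2), g₂|_{M₁}(x) = M₁(1/2 − φ(t_x)/2), g₃|_{M₁}(x) = M₁(1/2 + φ(t_x)/2), g₄|_{M₁}(x) = M₁(1 − φ(t_x)/2), and constant values M₁(0), M₁(1/2), M₁(1/2), M₁(1) respectively on M \ M₁, one has ⋃_{i=1}^4 g_i(M) = M₁. -/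
/-- The distance-to-nearest-integer sawtooth function. -/
noncomputable def sawtooth (t : ℝ) : ℝ := |t - round t|

/-- The rescaled sawtooth `φ_n(t) = 2^{-n} φ(2^n t)`. -/
noncomputable def sawtoothN (n : ℕ) (t : ℝ) : ℝ := (1 / 2 ^ n) * sawtooth (2 ^ n * t)

/-- The bone `I = [0,1] × {0}` of the shark teeth. -/
def bone : Set (ℝ × ℝ) := Set.Icc (0 : ℝ) 1 ×ˢ ({0} : Set ℝ)

/-- Parametrization of the `k`-th row of teeth: `t ↦ (t, (1/k) φ_{n_k}(t))`. -/
noncomputable def rowFun (nk : ℕ → ℕ) (k : ℕ) (t : ℝ) : ℝ × ℝ :=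
  (t, (1 / (k : ℝ)) * sawtoothN (nk k) t)

/-- The `k`-th row of teeth `M_k`. -/
noncomputable def rowSet (nk : ℕ → ℕ) (k : ℕ) : Set (ℝ × ℝ) :=
  rowFun nk k '' Set.Icc (0 : ℝ) 1

/-- The shark teeth space `M = I ∪ ⋃_{k ≥ 1} M_k`. -/
noncomputable def shark (nk : ℕ → ℕ) : Set (ℝ × ℝ) :=
  bone ∪ ⋃ k, ⋃ (_ : 1 ≤ k), rowSet nk k

/-! On `M₁` the map `gᵢ` is `t ↦ cᵢ (φ t)` with `cᵢ` affine, sending `[0, 1/2]` onto the `i`-th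
quarter of `[0, 1]`; off `M₁` it is constant with value in `M₁`. Hence every image lies in `M₁`,
and since `φ` is the identity on `[0, 1/2]` the four quarters are all attained. -/

open Set

lemma sawtooth_mem_Icc (t : ℝ) : sawtooth t ∈ Icc 0 (1 / 2) :=
  ⟨abs_nonneg _, abs_sub_round t⟩

lemma sawtooth_eq_self {s : ℝ} (hs : s ∈ Icc 0 (1 / 2)) : sawtooth s = s := by
  rw [sawtooth, abs_sub_round_eq_min, Int.fract_eq_self.2 ⟨hs.1, by linarith [hs.2]⟩]
  exact min_eq_left (by linarith [hs.2])

lemma rowSet_subset_shark (nk : ℕ → ℕ) {k : ℕ} (hk : 1 ≤ k) : rowSet nk k ⊆ shark nk :=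
  fun _ hx => Or.inr (mem_iUnion₂.2 ⟨k, hk, hx⟩)

lemma image_subset_image_of_cases {α β γ : Type*} {S A : Set α} {T : Set γ} {g : α → β}
    {F : γ → β} {u : α → γ} {a : γ} (ha : a ∈ T) (hu : ∀ x ∈ A, u x ∈ T)
    (hoff : ∀ x ∈ S \ A, g x = F a) (hon : ∀ x ∈ A, g x = F (u x)) : g '' S ⊆ F '' T := by
  rintro _ ⟨x, hxS, rfl⟩
  by_cases hxA : x ∈ A
  · exact hon x hxA ▸ mem_image_of_mem F (hu x hxA)
  · exact hoff x ⟨hxS, hxA⟩ ▸ mem_image_of_mem F ha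

lemma rowFun_mem_image_shark {nk : ℕ → ℕ} {k : ℕ} (hk : 1 ≤ k) {g : ℝ × ℝ → ℝ × ℝ}
    (c : ℝ → ℝ) (hon : ∀ x ∈ rowSet nk k, g x = rowFun nk k (c (sawtooth x.1)))
    {s t : ℝ} (hs : s ∈ Icc 0 (1 / 2)) (hst : c s = t) : rowFun nk k t ∈ g '' shark nk := by
  have hrow : rowFun nk k s ∈ rowSet nk k :=
    mem_image_of_mem _ ⟨hs.1, by linarith [hs.2]⟩
  refine ⟨rowFun nk k s, rowSet_subset_shark nk hk hrow, ?_⟩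
  rw [hon _ hrow, ← hst]
  exact congrArg (rowFun nk k ∘ c) (sawtooth_eq_self hs)

theorem g_maps_cover_first_row_general (nk : ℕ → ℕ)
    (g₁ g₂ g₃ g₄ : ℝ × ℝ → ℝ × ℝ)
    (h1c : ∀ x ∈ shark nk \ rowSet nk 1, g₁ x = rowFun nk 1 0)
    (h1 : ∀ x ∈ rowSet nk 1, g₁ x = rowFun nk 1 (sawtooth x.1 / 2))
    (h2c : ∀ x ∈ shark nk \ rowSet nk 1, g₂ x = rowFun nk 1 (1/2))
    (h2 : ∀ x ∈ rowSet nk 1, g₂ x = rowFun nk 1 (1/2 - sawtooth x.1 / 2))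
    (h3c : ∀ x ∈ shark nk \ rowSet nk 1, g₃ x = rowFun nk 1 (1/2))
    (h3 : ∀ x ∈ rowSet nk 1, g₃ x = rowFun nk 1 (1/2 + sawtooth x.1 / 2))
    (h4c : ∀ x ∈ shark nk \ rowSet nk 1, g₄ x = rowFun nk 1 1)
    (h4 : ∀ x ∈ rowSet nk 1, g₄ x = rowFun nk 1 (1 - sawtooth x.1 / 2)) :
    g₁ '' shark nk ∪ g₂ '' shark nk ∪ g₃ '' shark nk ∪ g₄ '' shark nk =
      rowSet nk 1 := by
  have hφ (x : ℝ × ℝ) := sawtooth_mem_Icc x.1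
  refine subset_antisymm (union_subset (union_subset (union_subset ?_ ?_) ?_) ?_) ?_
  · exact image_subset_image_of_cases (by norm_num) (fun x _ => ⟨by linarith [(hφ x).1],
      by linarith [(hφ x).2]⟩) h1c h1
  · exact image_subset_image_of_cases (by norm_num) (fun x _ => ⟨by linarith [(hφ x).2],
      by linarith [(hφ x).1]⟩) h2c h2
  · exact image_subset_image_of_cases (by norm_num) (fun x _ => ⟨by linarith [(hφ x).1],
      by linarith [(hφ x).2]⟩) h3c h3
  · exact image_subset_image_of_cases (by norm_num) (fun x _ => ⟨by linarith [(hφ x).2],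
      by linarith [(hφ x).1]⟩) h4c h4
  rintro _ ⟨t, ⟨ht0, ht1⟩, rfl⟩
  rcases le_or_gt t (1 / 4) with h | h
  · exact .inl <| .inl <| .inl <| rowFun_mem_image_shark le_rfl (· / 2) h1
      (s := 2 * t) ⟨by linarith, by linarith⟩ (by ring)
  rcases le_or_gt t (1 / 2) with h' | h'
  · exact .inl <| .inl <| .inr <| rowFun_mem_image_shark le_rfl (1 / 2 - · / 2) h2
      (s := 1 - 2 * t) ⟨by linarith, by linarith⟩ (by ring)
  rcases le_or_gt t (3 / 4) with h'' | h''
  · exact .inl <| .inr <| rowFun_mem_image_shark le_rfl (1 / 2 + · / 2) h3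
      (s := 2 * t - 1) ⟨by linarith, by linarith⟩ (by ring)
  · exact .inr <| rowFun_mem_image_shark le_rfl (1 - · / 2) h4
      (s := 2 - 2 * t) ⟨by linarith, by linarith⟩ (by ring)

theorem g_maps_cover_first_row (nk : ℕ → ℕ) (hmono : Monotone nk)
    (g₁ g₂ g₃ g₄ : ℝ × ℝ → ℝ × ℝ)
    (h1c : ∀ x ∈ shark nk \ rowSet nk 1, g₁ x = rowFun nk 1 0)
    (h1 : ∀ x ∈ rowSet nk 1, g₁ x = rowFun nk 1 (sawtooth x.1 / 2))
    (h2c : ∀ x ∈ shark nk \ rowSet nk 1, g₂ x = rowFun nk 1 (1/2))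
    (h2 : ∀ x ∈ rowSet nk 1, g₂ x = rowFun nk 1 (1/2 - sawtooth x.1 / 2))
    (h3c : ∀ x ∈ shark nk \ rowSet nk 1, g₃ x = rowFun nk 1 (1/2))
    (h3 : ∀ x ∈ rowSet nk 1, g₃ x = rowFun nk 1 (1/2 + sawtooth x.1 / 2))
    (h4c : ∀ x ∈ shark nk \ rowSet nk 1, g₄ x = rowFun nk 1 1)
    (h4 : ∀ x ∈ rowSet nk 1, g₄ x = rowFun nk 1 (1 - sawtooth x.1 / 2)) :
    g₁ '' shark nk ∪ g₂ '' shark nk ∪ g₃ '' shark nk ∪ g₄ '' shark nk =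
      rowSet nk 1 :=
  g_maps_cover_first_row_general nk g₁ g₂ g₃ g₄ h1c h1 h2c h2 h3c h3 h4c h4
end
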